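/- arXiv:2409.16617 — 2 statements merged into one kernel-verified Lean document; each statement's English description precedes it below -/
import Mathlib

section
/- For any θ > 1, ℓ ∈ (0, 1/3) and a > 0, with δ := (ℓ + 2/3)^{1/(θ-1)}, the integral M(a, λ) := ∫₀^a exp(z^θ - λ z) dz satisfies M(a, ℓ a^{θ-1}) ≥ a^{1-θ} (e^{2a^θ/3} - e^{2δ a^θ/3}). -/
theorem stmt_1 (θ ℓ a : ℝ) (hθ : 1 < θ) (hℓ : ℓ ∈ Set.Ioo (0:ℝ) (1/3)) (ha : 0 < a)
    (δ : ℝ) (hδ : δ = (ℓ + 2/3) ^ ((1:ℝ) / (θ - 1))) :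
    a ^ (1 - θ) * (Real.exp (2 * a ^ θ / 3) - Real.exp (2 * δ * a ^ θ / 3))
      ≤ ∫ z in (0:ℝ)..a, Real.exp (z ^ θ - (ℓ * a ^ (θ - 1)) * z) := by
  obtain ⟨hℓ0, hℓ3⟩ := hℓ
  have hθ1 : (0:ℝ) < θ - 1 := by linarith
  have hx0 : (0:ℝ) < ℓ + 2/3 := by linarith
  have hx1 : ℓ + 2/3 < 1 := by linarith
  have hδ0 : 0 < δ := hδ ▸ Real.rpow_pos_of_pos hx0 _
  have hδ1 : δ < 1 := by
    rw [hδ]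
    exact Real.rpow_lt_one hx0.le hx1 (by positivity)
  have hδpow : δ ^ (θ - 1) = ℓ + 2/3 := by
    rw [hδ, ← Real.rpow_mul hx0.le, one_div, inv_mul_cancel₀ hθ1.ne', Real.rpow_one]
  set c : ℝ := ℓ * a ^ (θ - 1) with hc
  set k : ℝ := 2/3 * a ^ (θ - 1) with hk
  have hap : (0:ℝ) < a ^ (θ - 1) := Real.rpow_pos_of_pos ha _
  have hkpos : 0 < k := by positivity
  have hδa : 0 ≤ δ * a := by positivity
  have hδaa : δ * a ≤ a := by nlinarith
  -- continuity of the integrand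
  have hcontp : Continuous fun z : ℝ => z ^ θ := by
    rw [continuous_iff_continuousAt]
    intro z
    exact Real.continuousAt_rpow_const z θ (Or.inr (by linarith))
  have hcontf : Continuous fun z : ℝ => Real.exp (z ^ θ - c * z) :=
    Real.continuous_exp.comp (hcontp.sub (continuous_const.mul continuous_id))
  have hcontg : Continuous fun z : ℝ => Real.exp (k * z) :=
    Real.continuous_exp.comp (continuous_const.mul continuous_id)
  -- pointwise bound on [δa, a]
  have hpt : ∀ z ∈ Set.Icc (δ * a) a, Real.exp (k * z) ≤ Real.exp (z ^ θ - c * z) := by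
    intro z hz
    obtain ⟨hz1, hz2⟩ := hz
    have hz0 : 0 < z := lt_of_lt_of_le (by positivity) hz1
    apply Real.exp_le_exp.2
    have h1 : (δ * a) ^ (θ - 1) ≤ z ^ (θ - 1) :=
      Real.rpow_le_rpow (by positivity) hz1 hθ1.le
    have h2 : (δ * a) ^ (θ - 1) = (ℓ + 2/3) * a ^ (θ - 1) := by
      rw [Real.mul_rpow hδ0.le ha.le, hδpow]
    have h3 : z ^ θ = z ^ (θ - 1) * z := by
      rw [← Real.rpow_add_one hz0.ne' (θ - 1)]
      norm_num
    rw [h3]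
    rw [h2] at h1
    nlinarith
  -- value of the exponential integral
  have hint : ∫ z in (δ * a)..a, Real.exp (k * z)
      = Real.exp (k * a) / k - Real.exp (k * (δ * a)) / k := by
    have hderiv : ∀ z ∈ Set.uIcc (δ * a) a,
        HasDerivAt (fun z => Real.exp (k * z) / k) (Real.exp (k * z)) z := by
      intro z _
      have h1 : HasDerivAt (fun z : ℝ => Real.exp (k * z)) (Real.exp (k * z) * k) z := by
        have := (Real.hasDerivAt_exp (k * z)).comp z ((hasDerivAt_id z).const_mul k)
        rw [mul_one] at this
        exact this
      have := h1.div_const k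
      simpa [mul_div_cancel_right₀ _ hkpos.ne'] using this
    exact intervalIntegral.integral_eq_sub_of_hasDerivAt hderiv
      (hcontg.intervalIntegrable _ _)
  have hka : k * a = 2 * a ^ θ / 3 := by
    have h : a ^ (θ - 1) * a = a ^ θ := by
      rw [← Real.rpow_add_one ha.ne' (θ - 1)]; norm_num
    rw [hk]; nlinarith
  have hkda : k * (δ * a) = 2 * δ * a ^ θ / 3 := by
    have h : a ^ (θ - 1) * a = a ^ θ := by
      rw [← Real.rpow_add_one ha.ne' (θ - 1)]; norm_num
    rw [hk]; nlinarith
  -- combine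
  have hmono : ∫ z in (δ * a)..a, Real.exp (k * z)
      ≤ ∫ z in (δ * a)..a, Real.exp (z ^ θ - c * z) :=
    intervalIntegral.integral_mono_on hδaa (hcontg.intervalIntegrable _ _)
      (hcontf.intervalIntegrable _ _) hpt
  have hsplit : ∫ z in (0:ℝ)..a, Real.exp (z ^ θ - c * z)
      = (∫ z in (0:ℝ)..(δ * a), Real.exp (z ^ θ - c * z))
        + ∫ z in (δ * a)..a, Real.exp (z ^ θ - c * z) :=
    (intervalIntegral.integral_add_adjacent_intervals (hcontf.intervalIntegrable _ _)
      (hcontf.intervalIntegrable _ _)).symm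
  have hnn : 0 ≤ ∫ z in (0:ℝ)..(δ * a), Real.exp (z ^ θ - c * z) :=
    intervalIntegral.integral_nonneg hδa (fun x _ => (Real.exp_pos _).le)
  have hainv : a ^ (1 - θ) = (a ^ (θ - 1))⁻¹ := by
    rw [show (1 - θ) = -(θ - 1) by ring, Real.rpow_neg ha.le]
  have hD : 0 ≤ Real.exp (2 * a ^ θ / 3) - Real.exp (2 * δ * a ^ θ / 3) := by
    have hat : 0 ≤ a ^ θ := (Real.rpow_pos_of_pos ha θ).le
    have : 2 * δ * a ^ θ / 3 ≤ 2 * a ^ θ / 3 := by nlinarith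
    simpa using Real.exp_le_exp.2 this
  have hfinal : a ^ (1 - θ) * (Real.exp (2 * a ^ θ / 3) - Real.exp (2 * δ * a ^ θ / 3))
      ≤ Real.exp (k * a) / k - Real.exp (k * (δ * a)) / k := by
    rw [hka, hkda, hainv]
    rw [div_sub_div_same, hk]
    set D := Real.exp (2 * a ^ θ / 3) - Real.exp (2 * δ * a ^ θ / 3) with hDdef
    clear_value D
    rw [le_div_iff₀ (by positivity)]
    have hcancel : (a ^ (θ - 1))⁻¹ * a ^ (θ - 1) = 1 := inv_mul_cancel₀ hap.ne'
    calc (a ^ (θ - 1))⁻¹ * D * (2/3 * a ^ (θ - 1))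
        = 2/3 * ((a ^ (θ - 1))⁻¹ * a ^ (θ - 1)) * D := by ring
      _ = 2/3 * D := by rw [hcancel]; ring
      _ ≤ D := by linarith
  rw [hsplit]
  rw [hint] at hmono
  linarith
end

section
/- Let μ be a measure on [0,∞) with μ([0,a)) < ∞ for each a. Let σ > 0 and suppose there exists C > 0 such that log(μ([0,a))) ≤ C a^{1+σ} for all large a. Then for any c₁ > C, M_a(c₁ a^σ) := ∫_{[0,a)} e^{-c₁ a^σ z} μ(dz) satisfies limsup_{a→∞} M_a(c₁ a^σ) < ∞. -/
open MeasureTheory Filter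

theorem stmt_5 (μ : Measure ℝ) (hμfin : ∀ a : ℝ, 0 < a → μ (Set.Ico 0 a) < ⊤)
    (hμsupp : μ (Set.Iio 0) = 0) (σ : ℝ) (hσ : 0 < σ) (C : ℝ) (hC : 0 < C)
    (hgrowth : ∀ᶠ a : ℝ in atTop, Real.log ((μ (Set.Ico 0 a)).toReal) ≤ C * a ^ (1 + σ))
    (c₁ : ℝ) (hc₁ : C < c₁) :
    IsBoundedUnder (· ≤ ·) atTop
      (fun a : ℝ => ∫ z in Set.Ico (0:ℝ) a, Real.exp (-(c₁ * a ^ σ) * z) ∂μ) := by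
  classical
  have hc₁pos : 0 < c₁ := hC.trans hc₁
  have hσ' : (0:ℝ) ≤ 1 + σ := by linarith
  set f : ℝ → ENNReal := fun z => ENNReal.ofReal (Real.exp (-(c₁ * z ^ (1 + σ)))) with hf
  set K : ENNReal := ∫⁻ z in Set.Ici (0:ℝ), f z ∂μ with hK
  -- finiteness of measure of unit intervals
  have hfin : ∀ n : ℕ, μ (Set.Ico (n:ℝ) (n + 1)) < ⊤ := by
    intro n
    refine lt_of_le_of_lt (measure_mono ?_) (hμfin ((n:ℝ) + 1) (by positivity))
    exact Set.Ico_subset_Ico (by positivity) le_rfl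
  -- the sequence u
  set u : ℕ → ℝ := fun n =>
    Real.exp (-(c₁ * (n:ℝ) ^ (1 + σ))) * (μ (Set.Ico (n:ℝ) (n + 1))).toReal with hu
  have hu_nonneg : ∀ n, 0 ≤ u n := fun n => by positivity
  -- summability of u
  obtain ⟨a₀, ha₀⟩ := eventually_atTop.1 hgrowth
  set c₂ : ℝ := (C + c₁) / 2 with hc₂
  have hCc₂ : C < c₂ := by simp only [hc₂]; linarith
  have hc₂c₁ : c₂ < c₁ := by simp only [hc₂]; linarith
  set δ : ℝ := c₁ - c₂ with hδ
  have hδpos : 0 < δ := by simp only [hδ]; linarith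
  have hratio : ∀ᶠ n : ℕ in atTop, C * ((n:ℝ) + 1) ^ (1 + σ) ≤ c₂ * (n:ℝ) ^ (1 + σ) := by
    have t1 : Tendsto (fun n : ℕ => 1 + 1 / (n:ℝ)) atTop (nhds 1) := by
      simpa using (tendsto_const_nhds (x := (1:ℝ))).add (tendsto_one_div_atTop_nhds_zero_nat : Tendsto (fun n : ℕ => 1 / (n:ℝ)) atTop (nhds 0))
    have t2 : Tendsto (fun n : ℕ => C * (1 + 1 / (n:ℝ)) ^ (1 + σ)) atTop (nhds C) := by
      have := (t1.rpow_const (Or.inr hσ')).const_mul C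
      simpa using this
    filter_upwards [t2.eventually_le_const hCc₂, eventually_ge_atTop 1] with n hn hn1
    have hnpos : (0:ℝ) < n := by exact_mod_cast hn1
    have hsplit : ((n:ℝ) + 1) = (1 + 1 / (n:ℝ)) * n := by field_simp
    have h1 : (0:ℝ) ≤ 1 + 1 / (n:ℝ) := by positivity
    calc C * ((n:ℝ) + 1) ^ (1 + σ)
        = C * ((1 + 1 / (n:ℝ)) ^ (1 + σ) * (n:ℝ) ^ (1 + σ)) := by
          rw [hsplit, Real.mul_rpow h1 hnpos.le]
      _ = (C * (1 + 1 / (n:ℝ)) ^ (1 + σ)) * (n:ℝ) ^ (1 + σ) := by ring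
      _ ≤ c₂ * (n:ℝ) ^ (1 + σ) := by
          apply mul_le_mul_of_nonneg_right hn (Real.rpow_nonneg hnpos.le _)
  have hbound : ∀ᶠ n : ℕ in atTop, u n ≤ Real.exp (-(δ * n)) := by
    have hev : ∀ᶠ n : ℕ in atTop, a₀ ≤ (n:ℝ) + 1 := by
      filter_upwards [eventually_ge_atTop ⌈a₀⌉₊] with n hn
      calc a₀ ≤ ⌈a₀⌉₊ := Nat.le_ceil a₀
        _ ≤ (n:ℝ) := by exact_mod_cast hn
        _ ≤ (n:ℝ) + 1 := by linarith
    filter_upwards [hratio, hev, eventually_ge_atTop 1] with n hn hna hn1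
    have hn1' : (1:ℝ) ≤ n := by exact_mod_cast hn1
    have hmeas : (μ (Set.Ico (n:ℝ) (n + 1))).toReal ≤ Real.exp (C * ((n:ℝ) + 1) ^ (1 + σ)) := by
      have hle : (μ (Set.Ico (n:ℝ) (n + 1))).toReal ≤ (μ (Set.Ico (0:ℝ) ((n:ℝ) + 1))).toReal := by
        apply ENNReal.toReal_mono (hμfin _ (by positivity)).ne
        exact measure_mono (Set.Ico_subset_Ico (by positivity) le_rfl)
      refine hle.trans ?_
      calc (μ (Set.Ico (0:ℝ) ((n:ℝ) + 1))).toReal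
          ≤ Real.exp (Real.log ((μ (Set.Ico (0:ℝ) ((n:ℝ) + 1))).toReal)) := Real.le_exp_log _
        _ ≤ Real.exp (C * ((n:ℝ) + 1) ^ (1 + σ)) := Real.exp_le_exp.2 (ha₀ _ hna)
    have hpow : (n:ℝ) ≤ (n:ℝ) ^ (1 + σ) := by
      calc (n:ℝ) = (n:ℝ) ^ (1:ℝ) := (Real.rpow_one _).symm
        _ ≤ (n:ℝ) ^ (1 + σ) := Real.rpow_le_rpow_of_exponent_le hn1' (by linarith)
    calc u n ≤ Real.exp (-(c₁ * (n:ℝ) ^ (1 + σ))) * Real.exp (C * ((n:ℝ) + 1) ^ (1 + σ)) := by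
          apply mul_le_mul_of_nonneg_left hmeas (Real.exp_nonneg _)
      _ = Real.exp (C * ((n:ℝ) + 1) ^ (1 + σ) - c₁ * (n:ℝ) ^ (1 + σ)) := by
          rw [← Real.exp_add]; ring_nf
      _ ≤ Real.exp (-(δ * (n:ℝ) ^ (1 + σ))) := by
          apply Real.exp_le_exp.2; simp only [hδ]; linarith
      _ ≤ Real.exp (-(δ * n)) := by
          apply Real.exp_le_exp.2
          have := mul_le_mul_of_nonneg_left hpow hδpos.le
          linarith
  obtain ⟨N, hN⟩ := eventually_atTop.1 hbound
  have hsummable : Summable u := by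
    rw [← summable_nat_add_iff N]
    have hgeo : Summable (fun n : ℕ => Real.exp (-(δ * N)) * Real.exp (-δ) ^ n) :=
      (summable_geometric_of_lt_one (Real.exp_nonneg _)
        (Real.exp_lt_one_iff.2 (by linarith))).mul_left _
    refine Summable.of_nonneg_of_le (fun n => hu_nonneg _) (fun n => ?_) hgeo
    have h1 : u (n + N) ≤ Real.exp (-(δ * (n + N : ℕ))) := hN (n + N) (Nat.le_add_left _ _)
    refine h1.trans (le_of_eq ?_)
    rw [← Real.exp_nat_mul, ← Real.exp_add]
    push_cast
    ring_nf
  -- bound each piece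
  have hf_meas : Measurable f := by
    apply ENNReal.measurable_ofReal.comp
    exact Real.measurable_exp.comp (((Real.continuous_rpow_const hσ').measurable.const_mul c₁).neg)
  have hterm : ∀ n : ℕ, (∫⁻ z in Set.Ico (n:ℝ) (n + 1), f z ∂μ) ≤ ENNReal.ofReal (u n) := by
    intro n
    have hstep : (∫⁻ z in Set.Ico (n:ℝ) (n + 1), f z ∂μ)
        ≤ ∫⁻ _ in Set.Ico (n:ℝ) (n + 1), ENNReal.ofReal (Real.exp (-(c₁ * (n:ℝ) ^ (1 + σ)))) ∂μ := by
      apply setLIntegral_mono' measurableSet_Ico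
      intro z hz
      apply ENNReal.ofReal_le_ofReal
      apply Real.exp_le_exp.2
      have hz0 : (0:ℝ) ≤ n := by positivity
      have : (n:ℝ) ^ (1 + σ) ≤ z ^ (1 + σ) := Real.rpow_le_rpow hz0 hz.1 hσ'
      nlinarith [hc₁pos]
    refine hstep.trans ?_
    rw [setLIntegral_const]
    rw [← ENNReal.ofReal_toReal (hfin n).ne, ← ENNReal.ofReal_mul (Real.exp_nonneg _)]
  -- K is finite
  have hKfin : K < ⊤ := by
    have hsub : Set.Ici (0:ℝ) ⊆ ⋃ n : ℕ, Set.Ico (n:ℝ) (n + 1) := by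
      intro z hz
      refine Set.mem_iUnion.2 ⟨⌊z⌋₊, Nat.floor_le hz, Nat.lt_floor_add_one z⟩
    calc K ≤ ∫⁻ z in ⋃ n : ℕ, Set.Ico (n:ℝ) (n + 1), f z ∂μ := lintegral_mono_set hsub
      _ ≤ ∑' n : ℕ, ∫⁻ z in Set.Ico (n:ℝ) (n + 1), f z ∂μ := lintegral_iUnion_le _ _
      _ ≤ ∑' n : ℕ, ENNReal.ofReal (u n) := ENNReal.tsum_le_tsum hterm
      _ = ENNReal.ofReal (∑' n, u n) := (ENNReal.ofReal_tsum_of_nonneg hu_nonneg hsummable).symm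
      _ < ⊤ := ENNReal.ofReal_lt_top
  -- final bound
  refine ⟨K.toReal, ?_⟩
  rw [eventually_map]
  filter_upwards [eventually_ge_atTop (1:ℝ)] with a ha
  have ha0 : (0:ℝ) ≤ a := by linarith
  have heq : ∫ z in Set.Ico (0:ℝ) a, Real.exp (-(c₁ * a ^ σ) * z) ∂μ
      = (∫⁻ z in Set.Ico (0:ℝ) a, ENNReal.ofReal (Real.exp (-(c₁ * a ^ σ) * z)) ∂μ).toReal := by
    apply integral_eq_lintegral_of_nonneg_ae
    · exact Filter.Eventually.of_forall fun z => Real.exp_nonneg _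
    · exact (Real.continuous_exp.comp (continuous_const.mul continuous_id)).aestronglyMeasurable
  rw [heq]
  apply ENNReal.toReal_mono hKfin.ne
  calc (∫⁻ z in Set.Ico (0:ℝ) a, ENNReal.ofReal (Real.exp (-(c₁ * a ^ σ) * z)) ∂μ)
      ≤ ∫⁻ z in Set.Ico (0:ℝ) a, f z ∂μ := by
        apply setLIntegral_mono' measurableSet_Ico
        intro z hz
        apply ENNReal.ofReal_le_ofReal
        apply Real.exp_le_exp.2
        have hz0 : (0:ℝ) ≤ z := hz.1
        have hza : z ≤ a := hz.2.le
        have h1 : z ^ (1 + σ) ≤ a ^ σ * z := by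
          rcases eq_or_lt_of_le hz0 with h | h
          · rw [← h, Real.zero_rpow (by positivity)]; simp
          · rw [Real.rpow_add h, Real.rpow_one]
            have : z ^ σ ≤ a ^ σ := Real.rpow_le_rpow hz0 hza hσ.le
            nlinarith
        nlinarith [hc₁pos]
      _ ≤ K := lintegral_mono_set (fun z hz => hz.1)
end
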